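/- arXiv:1907.08275 — 3 statements merged into one kernel-verified Lean document; each statement's English description precedes it below -/
import Mathlib

section
/- Let f (with white fixed point set W) be a decorated permutation of [2n] of type C, let 𝓘 be its Grassmann necklace, and let M be the positroid of 𝓘. Let C be a weakly separated collection in M and let I ∈ C be pair-free. If a ∈ [n] and f⁻¹(a) ∈ [n] with f⁻¹(a) > a, then a ∈ I. -/
open Finset

/-- Position of `x` in the cyclic order on `[m] = {1,…,m}` starting at `a`:
`a` has position `0`, `a+1` position `1`, …, `a-1` position `m-1`. -/
def cpos (m a x : ℕ) : ℕ := (x + m - a) % m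

/-- The strict cyclic order `x <_a y` on `[m]`. -/
def clt (m a x y : ℕ) : Prop := cpos m a x < cpos m a y

instance (m a x y : ℕ) : Decidable (clt m a x y) :=
  inferInstanceAs (Decidable (_ < _))

/-- `I` and `J` are weakly separated as subsets of `[m]`: there do not exist
`c ∈ [m]` and `x₁ <_c x₂ <_c x₃ <_c x₄` with `x₁, x₃ ∈ I∖J` and `x₂, x₄ ∈ J∖I`. -/
def WSep (m : ℕ) (I J : Finset ℕ) : Prop :=
  ¬ ∃ c x₁ x₂ x₃ x₄ : ℕ, c ∈ Finset.Icc 1 m ∧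
      x₁ ∈ I \ J ∧ x₃ ∈ I \ J ∧ x₂ ∈ J \ I ∧ x₄ ∈ J \ I ∧
      clt m c x₁ x₂ ∧ clt m c x₂ x₃ ∧ clt m c x₃ x₄

/-- A weakly separated collection of `k`-element subsets of `[m]`. -/
def IsWSColl (m k : ℕ) (C : Finset (Finset ℕ)) : Prop :=
  (∀ I ∈ C, I ⊆ Finset.Icc 1 m ∧ I.card = k) ∧
    ∀ I ∈ C, ∀ J ∈ C, WSep m I J

/-- `Ī := [2n] ∖ {i' : i ∈ I}` where `i' = 2n+1-i`. -/
def bar (n : ℕ) (I : Finset ℕ) : Finset ℕ :=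
  Finset.Icc 1 (2 * n) \ I.image fun i => 2 * n + 1 - i

/-- A collection is symmetric if it is closed under `I ↦ Ī`. -/
def IsSym (n : ℕ) (C : Finset (Finset ℕ)) : Prop := ∀ I ∈ C, bar n I ∈ C

/-- `I` has a full pair at `{a, a'}`. -/
def FullPair (n : ℕ) (I : Finset ℕ) (a : ℕ) : Prop := a ∈ I ∧ 2 * n + 1 - a ∈ I

/-- `I` has an empty pair at `{a, a'}`. -/
def EmptyPair (n : ℕ) (I : Finset ℕ) (a : ℕ) : Prop := a ∉ I ∧ 2 * n + 1 - a ∉ I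

instance (n : ℕ) (I : Finset ℕ) (a : ℕ) : Decidable (FullPair n I a) :=
  inferInstanceAs (Decidable (_ ∈ I ∧ _ ∈ I))

instance (n : ℕ) (I : Finset ℕ) (a : ℕ) : Decidable (EmptyPair n I a) :=
  inferInstanceAs (Decidable (_ ∉ I ∧ _ ∉ I))

/-- `I` is pair-free: it has no full pair. -/
def PairFree (n : ℕ) (I : Finset ℕ) : Prop :=
  ∀ a ∈ Finset.Icc 1 n, ¬ FullPair n I a

instance (n : ℕ) (I : Finset ℕ) : Decidable (PairFree n I) :=
  inferInstanceAs (Decidable (∀ a ∈ Finset.Icc 1 n, ¬ FullPair n I a))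

/-- `I` is admissible: `I` and `Ī` are weakly separated. -/
def Admissible (n : ℕ) (I : Finset ℕ) : Prop := WSep (2 * n) I (bar n I)

/-- `I` is left-handed: admissible, has at least one full pair, and every full
pair of `I` is above every empty pair of `I`. -/
def LeftHanded (n : ℕ) (I : Finset ℕ) : Prop :=
  Admissible n I ∧ (∃ a ∈ Finset.Icc 1 n, FullPair n I a) ∧
    ∀ a ∈ Finset.Icc 1 n, ∀ b ∈ Finset.Icc 1 n,
      FullPair n I a → EmptyPair n I b → a < b

/-- The Gale order `I ≤_a J`: comparing the sorted lists of positions (in the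
cyclic order starting at `a`) elementwise. -/
def galeLe (m a : ℕ) (I J : Finset ℕ) : Prop :=
  List.Forall₂ (· ≤ ·) ((I.image (cpos m a)).sort (· ≤ ·))
    ((J.image (cpos m a)).sort (· ≤ ·))

/-- A Grassmann necklace of type `(n, 2n)`: a sequence `I_1, …, I_{2n}` of
`n`-element subsets of `[2n]` with `I_i ∖ {i} ⊆ I_{i+1}` (indices mod `2n`). -/
def IsNecklace (n : ℕ) (ℐ : ℕ → Finset ℕ) : Prop :=
  (∀ a ∈ Finset.Icc 1 (2 * n), ℐ a ⊆ Finset.Icc 1 (2 * n) ∧ (ℐ a).card = n) ∧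
    ∀ i ∈ Finset.Icc 1 (2 * n), ℐ i \ {i} ⊆ ℐ (i % (2 * n) + 1)

/-- A Grassmann necklace is of type C if `I_{i'} = bar (I_{i+1})` (indices mod `2n`). -/
def IsTypeC (n : ℕ) (ℐ : ℕ → Finset ℕ) : Prop :=
  ∀ i ∈ Finset.Icc 1 (2 * n), ℐ (2 * n + 1 - i) = bar n (ℐ (i % (2 * n) + 1))

/-- The positroid of a Grassmann necklace: all `n`-element subsets `J` of `[2n]`
with `I_a ≤_a J` for all `a ∈ [2n]`. -/
def positroid (n : ℕ) (ℐ : ℕ → Finset ℕ) : Set (Finset ℕ) :=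
  {J | J ⊆ Finset.Icc 1 (2 * n) ∧ J.card = n ∧
    ∀ a ∈ Finset.Icc 1 (2 * n), galeLe (2 * n) a (ℐ a) J}

/-- A weakly separated collection in the positroid of the necklace `ℐ`:
`{I_1,…,I_{2n}} ⊆ C ⊆ M` and `C` is pairwise weakly separated. -/
def IsWSCollIn (n : ℕ) (ℐ : ℕ → Finset ℕ) (C : Finset (Finset ℕ)) : Prop :=
  (∀ a ∈ Finset.Icc 1 (2 * n), ℐ a ∈ C) ∧ (∀ J ∈ C, J ∈ positroid n ℐ) ∧
    ∀ I ∈ C, ∀ J ∈ C, WSep (2 * n) I J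

/-- A decorated permutation of `[2n]` of type C: a bijection `f` of `[2n]` with
`f(i') = (f(i))'`, together with a set `W` of white fixed points such that a
fixed point `i` lies in `W` iff `i'` does not. -/
def IsDecPermC (n : ℕ) (f : Equiv.Perm ℕ) (W : Finset ℕ) : Prop :=
  (∀ i ∈ Finset.Icc 1 (2 * n), f i ∈ Finset.Icc 1 (2 * n)) ∧
  (∀ i ∈ Finset.Icc 1 (2 * n), f (2 * n + 1 - i) = 2 * n + 1 - f i) ∧
  (∀ w ∈ W, w ∈ Finset.Icc 1 (2 * n) ∧ f w = w) ∧
  (∀ i ∈ Finset.Icc 1 (2 * n), f i = i → (i ∈ W ↔ 2 * n + 1 - i ∉ W))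

/-- The Grassmann necklace of a decorated permutation:
`I_a = {i ∈ [2n] : i ≠ f⁻¹(i) and i <_a f⁻¹(i)} ∪ W`. -/
def necklaceOf (n : ℕ) (f : Equiv.Perm ℕ) (W : Finset ℕ) (a : ℕ) : Finset ℕ :=
  ((Finset.Icc 1 (2 * n)).filter fun i => i ≠ f.symm i ∧ clt (2 * n) a i (f.symm i)) ∪ W

/-- `(i,j)` is an alignment of `f`: the numbers `i, f(i), f(j), j` are distinct
and appear in cyclic order. -/
def IsAlignment (n : ℕ) (f : Equiv.Perm ℕ) (i j : ℕ) : Prop :=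
  ([i, f i, f j, j] : List ℕ).Pairwise (· ≠ ·) ∧
    ∃ c ∈ Finset.Icc 1 (2 * n), clt (2 * n) c i (f i) ∧
      clt (2 * n) c (f i) (f j) ∧ clt (2 * n) c (f j) j

lemma cpos_eq {m c x : ℕ} (hc1 : 1 ≤ c) (hc2 : c ≤ m) (hx1 : 1 ≤ x) (hx2 : x ≤ m) :
    cpos m c x = if c ≤ x then x - c else x + m - c := by
  unfold cpos
  rcases le_or_gt c x with h | h
  · rw [if_pos h]
    have h1 : x + m - c = m + (x - c) := by omega
    rw [h1, Nat.add_mod_left]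
    exact Nat.mod_eq_of_lt (by omega)
  · rw [if_neg (by omega)]
    exact Nat.mod_eq_of_lt (by omega)

lemma countP_le_of_forall₂ {l₁ l₂ : List ℕ} (h : List.Forall₂ (· ≤ ·) l₁ l₂) (t : ℕ) :
    l₂.countP (fun x => x ≤ t) ≤ l₁.countP (fun x => x ≤ t) := by
  induction h with
  | nil => simp
  | cons hab htl ih =>
    rename_i x y l₁' l₂'
    simp only [List.countP_cons]
    by_cases hy : y ≤ t
    · have hx : x ≤ t := le_trans hab hy
      simp [hx, hy]; omega
    · simp [hy]; split <;> omega

lemma sort_countP (s : Finset ℕ) (p : ℕ → Prop) [DecidablePred p] :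
    (s.sort (· ≤ ·)).countP (fun x => decide (p x)) = (s.filter p).card := by
  have h1 := Multiset.coe_countP (p := p) (s.sort (· ≤ ·))
  rw [← h1, Finset.sort_eq, Multiset.countP_eq_card_filter]
  rfl

lemma cpos_injOn {m c : ℕ} (hc1 : 1 ≤ c) (hc2 : c ≤ m) :
    Set.InjOn (cpos m c) (Finset.Icc 1 m) := by
  intro x hx y hy hxy
  simp only [Finset.coe_Icc, Set.mem_Icc] at hx hy
  rw [cpos_eq hc1 hc2 hx.1 hx.2, cpos_eq hc1 hc2 hy.1 hy.2] at hxy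
  split_ifs at hxy <;> omega

lemma filter_cpos_card {m c : ℕ} (hc1 : 1 ≤ c) (hc2 : c ≤ m) {S : Finset ℕ}
    (hS : S ⊆ Finset.Icc 1 m) (t : ℕ) :
    ((S.image (cpos m c)).sort (· ≤ ·)).countP (fun x => decide (x ≤ t)) =
      (S.filter fun x => cpos m c x ≤ t).card := by
  rw [sort_countP, Finset.filter_image,
    Finset.card_image_of_injOn ((cpos_injOn hc1 hc2).mono ?_)]
  intro z hz
  exact hS (Finset.mem_of_mem_filter _ hz)

lemma gale_filter_card {m c : ℕ} (hc1 : 1 ≤ c) (hc2 : c ≤ m) {J I : Finset ℕ}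
    (hJ : J ⊆ Finset.Icc 1 m) (hI : I ⊆ Finset.Icc 1 m) (h : galeLe m c J I) (t : ℕ) :
    (I.filter fun x => cpos m c x ≤ t).card ≤ (J.filter fun x => cpos m c x ≤ t).card := by
  rw [← filter_cpos_card hc1 hc2 hJ t, ← filter_cpos_card hc1 hc2 hI t]
  exact countP_le_of_forall₂ h t

lemma pair_mem {n : ℕ} {I : Finset ℕ} (hI : I ⊆ Finset.Icc 1 (2 * n))
    (hcard : I.card = n) (hpf : PairFree n I) {a : ℕ} (ha : a ∈ Finset.Icc 1 n) :
    a ∈ I ∨ 2 * n + 1 - a ∈ I := by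
  simp only [Finset.mem_Icc] at ha
  set g : ℕ → ℕ := fun x => if x ≤ n then x else 2 * n + 1 - x with hg
  have hinj : Set.InjOn g I := by
    intro x hx y hy hxy
    have hxb := Finset.mem_Icc.mp (hI hx)
    have hyb := Finset.mem_Icc.mp (hI hy)
    simp only [hg] at hxy
    split_ifs at hxy with h1 h2 h2
    · exact hxy
    · exfalso
      exact hpf x (Finset.mem_Icc.mpr ⟨hxb.1, h1⟩) ⟨hx, by rw [hxy]; convert (Finset.mem_coe.mp hy) using 2; omega⟩
    · exfalso
      exact hpf y (Finset.mem_Icc.mpr ⟨hyb.1, h2⟩) ⟨hy, by rw [← hxy]; convert (Finset.mem_coe.mp hx) using 2; omega⟩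
    · omega
  have hsub : I.image g ⊆ Finset.Icc 1 n := by
    intro z hz
    obtain ⟨x, hx, rfl⟩ := Finset.mem_image.mp hz
    have hxb := Finset.mem_Icc.mp (hI hx)
    simp only [hg]
    split_ifs with h1 <;> exact Finset.mem_Icc.mpr (by omega)
  have hcardim : (I.image g).card = n := by rw [Finset.card_image_of_injOn hinj, hcard]
  have heq : I.image g = Finset.Icc 1 n :=
    Finset.eq_of_subset_of_card_le hsub (by simp [hcardim, Nat.card_Icc])
  have : a ∈ I.image g := by rw [heq]; exact Finset.mem_Icc.mpr ha
  obtain ⟨x, hx, hgx⟩ := Finset.mem_image.mp this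
  have hxb := Finset.mem_Icc.mp (hI hx)
  simp only [hg] at hgx
  split_ifs at hgx with h1
  · left; rwa [hgx] at hx
  · right; convert hx using 1; omega

/-- If `I` is a pair-free element of a weakly separated collection
in `M`, `a ∈ [n]`, `f⁻¹(a) ∈ [n]` and `f⁻¹(a) > a`, then `a ∈ I`. -/
theorem statement9 (n : ℕ) (f : Equiv.Perm ℕ) (W : Finset ℕ)
    (hf : IsDecPermC n f W)
    (C : Finset (Finset ℕ)) (hC : IsWSCollIn n (necklaceOf n f W) C)
    (I : Finset ℕ) (hI : I ∈ C) (hpf : PairFree n I)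
    (a : ℕ) (ha : a ∈ Finset.Icc 1 n) (hfa : f.symm a ∈ Finset.Icc 1 n)
    (hlt : a < f.symm a) :
    a ∈ I := by
  unfold IsWSCollIn at hC
  obtain ⟨hCmem, hCpos, hCws⟩ := hC
  have hIpos := hCpos I hI
  unfold positroid at hIpos
  obtain ⟨hIsub, hIcard, hIgale⟩ := hIpos
  simp only [Finset.mem_Icc] at ha hfa
  have ha1 : 1 ≤ a := ha.1
  have ha2 : a ≤ n := ha.2
  set b := f.symm a with hb
  have hb1 : 1 ≤ b := hfa.1
  have hb2 : b ≤ n := hfa.2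
  by_contra haI
  have hapI : 2 * n + 1 - a ∈ I :=
    (pair_mem hIsub hIcard hpf (Finset.mem_Icc.mpr ha)).resolve_left haI
  have hfb : f b = a := f.apply_symm_apply a
  have hbIcc : b ∈ Finset.Icc 1 (2 * n) := Finset.mem_Icc.mpr ⟨hb1, by omega⟩
  have hfbp : f (2 * n + 1 - b) = 2 * n + 1 - a := by
    rw [hf.2.1 b hbIcc, hfb]
  have hsymm_ap : f.symm (2 * n + 1 - a) = 2 * n + 1 - b := by
    rw [← hfbp, Equiv.symm_apply_apply]
  set J := necklaceOf n f W (2 * n + 1 - b) with hJdef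
  have hbpIcc : 2 * n + 1 - b ∈ Finset.Icc 1 (2 * n) := Finset.mem_Icc.mpr ⟨by omega, by omega⟩
  have hJC : J ∈ C := hCmem _ hbpIcc
  have hJpos := hCpos J hJC
  unfold positroid at hJpos
  obtain ⟨hJsub, hJcard, -⟩ := hJpos
  have hgale : galeLe (2 * n) (2 * n + 1 - b) J I := hIgale _ hbpIcc
  -- a ∈ J
  have haJ : a ∈ J := by
    rw [hJdef]
    unfold necklaceOf
    apply Finset.mem_union_left
    apply Finset.mem_filter.mpr
    refine ⟨Finset.mem_Icc.mpr ⟨ha1, by omega⟩, by rw [← hb]; omega, ?_⟩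
    rw [← hb]
    unfold clt
    rw [cpos_eq (by omega) (by omega) (by omega) (by omega),
        cpos_eq (by omega) (by omega) (by omega) (by omega)]
    split_ifs <;> omega
  -- 2n+1-a ∉ J
  have hapJ : 2 * n + 1 - a ∉ J := by
    intro hmem
    rw [hJdef] at hmem
    unfold necklaceOf at hmem
    rcases Finset.mem_union.mp hmem with hfil | hW
    · obtain ⟨-, -, hclt⟩ := Finset.mem_filter.mp hfil
      rw [hsymm_ap] at hclt
      unfold clt at hclt
      rw [cpos_eq (by omega) (by omega) (by omega) (by omega),
          cpos_eq (by omega) (by omega) (by omega) (by omega)] at hclt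
      split_ifs at hclt <;> omega
    · have hw := hf.2.2.1 _ hW
      have := f.injective (hfbp.trans hw.2.symm)
      omega
  -- find q ∈ J \ I in the arc [2n+1-b, 2n+1-a]
  have hcA := gale_filter_card (m := 2 * n) (c := 2 * n + 1 - b) (by omega) (by omega)
    hJsub hIsub hgale (b - a)
  have hapP : cpos (2 * n) (2 * n + 1 - b) (2 * n + 1 - a) = b - a := by
    rw [cpos_eq (by omega) (by omega) (by omega) (by omega)]
    split_ifs <;> omega
  have hq : ∃ q, q ∈ J ∧ q ∉ I ∧ cpos (2 * n) (2 * n + 1 - b) q ≤ b - a := by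
    by_contra hcon
    push_neg at hcon
    have hsub2 : J.filter (fun x => cpos (2 * n) (2 * n + 1 - b) x ≤ b - a) ⊆
        I.filter (fun x => cpos (2 * n) (2 * n + 1 - b) x ≤ b - a) := by
      intro z hz
      obtain ⟨hzJ, hzP⟩ := Finset.mem_filter.mp hz
      by_contra hzI
      have hzI' : z ∉ I := fun h => hzI (Finset.mem_filter.mpr ⟨h, hzP⟩)
      exact absurd hzP (by simpa using hcon z hzJ hzI')
    have hss : J.filter (fun x => cpos (2 * n) (2 * n + 1 - b) x ≤ b - a) ⊂
        I.filter (fun x => cpos (2 * n) (2 * n + 1 - b) x ≤ b - a) := by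
      refine ⟨hsub2, fun hsup => hapJ ?_⟩
      exact Finset.mem_of_mem_filter _
        (hsup (Finset.mem_filter.mpr ⟨hapI, by rw [hapP]⟩))
    have := Finset.card_lt_card hss
    omega
  obtain ⟨q, hqJ, hqI, hqP⟩ := hq
  have hqb := Finset.mem_Icc.mp (hJsub hqJ)
  have hqne : q ≠ 2 * n + 1 - a := fun h => hqI (h ▸ hapI)
  have hqrange : 2 * n + 1 - b ≤ q ∧ q < 2 * n + 1 - a := by
    rw [cpos_eq (by omega) (by omega) (by omega) (by omega)] at hqP
    split_ifs at hqP <;> omega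
  -- find x ∈ I \ J in the arc [a+1, 2n-b]
  have hcB := gale_filter_card (m := 2 * n) (c := 2 * n + 1 - b) (by omega) (by omega)
    hJsub hIsub hgale (a + b - 2)
  have hIsplit := Finset.card_filter_add_card_filter_not (s := I)
    (p := fun x => cpos (2 * n) (2 * n + 1 - b) x ≤ a + b - 2)
  have hJsplit := Finset.card_filter_add_card_filter_not (s := J)
    (p := fun x => cpos (2 * n) (2 * n + 1 - b) x ≤ a + b - 2)
  have haP' : ¬ (cpos (2 * n) (2 * n + 1 - b) a ≤ a + b - 2) := by
    rw [cpos_eq (by omega) (by omega) (by omega) (by omega)]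
    split_ifs <;> omega
  have hx : ∃ x, x ∈ I ∧ x ∉ J ∧ ¬ (cpos (2 * n) (2 * n + 1 - b) x ≤ a + b - 2) := by
    by_contra hcon
    push_neg at hcon
    have hsub2 : I.filter (fun x => ¬ (cpos (2 * n) (2 * n + 1 - b) x ≤ a + b - 2)) ⊆
        J.filter (fun x => ¬ (cpos (2 * n) (2 * n + 1 - b) x ≤ a + b - 2)) := by
      intro z hz
      obtain ⟨hzI, hzP⟩ := Finset.mem_filter.mp hz
      by_contra hzJ
      have hzJ' : z ∉ J := fun h => hzJ (Finset.mem_filter.mpr ⟨h, hzP⟩)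
      exact hzP (hcon z hzI hzJ')
    have hss : I.filter (fun x => ¬ (cpos (2 * n) (2 * n + 1 - b) x ≤ a + b - 2)) ⊂
        J.filter (fun x => ¬ (cpos (2 * n) (2 * n + 1 - b) x ≤ a + b - 2)) := by
      refine ⟨hsub2, fun hsup => haI ?_⟩
      exact Finset.mem_of_mem_filter _
        (hsup (Finset.mem_filter.mpr ⟨haJ, haP'⟩))
    have := Finset.card_lt_card hss
    omega
  obtain ⟨x, hxI, hxJ, hxP⟩ := hx
  have hxb := Finset.mem_Icc.mp (hIsub hxI)
  have hxa : x ≠ a := fun h => haI (h ▸ hxI)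
  have hxrange : a + 1 ≤ x ∧ x ≤ 2 * n - b := by
    rw [cpos_eq (by omega) (by omega) (by omega) (by omega)] at hxP
    split_ifs at hxP <;> omega
  -- weak separation violation
  refine hCws I hI J hJC ⟨2 * n + 1 - a, 2 * n + 1 - a, a, x, q,
    Finset.mem_Icc.mpr ⟨by omega, by omega⟩,
    Finset.mem_sdiff.mpr ⟨hapI, hapJ⟩,
    Finset.mem_sdiff.mpr ⟨hxI, hxJ⟩,
    Finset.mem_sdiff.mpr ⟨haJ, haI⟩,
    Finset.mem_sdiff.mpr ⟨hqJ, hqI⟩, ?_, ?_, ?_⟩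
  · unfold clt
    rw [cpos_eq (by omega) (by omega) (by omega) (by omega),
        cpos_eq (by omega) (by omega) (by omega) (by omega)]
    split_ifs <;> omega
  · unfold clt
    rw [cpos_eq (by omega) (by omega) (by omega) (by omega),
        cpos_eq (by omega) (by omega) (by omega) (by omega)]
    split_ifs <;> omega
  · unfold clt
    rw [cpos_eq (by omega) (by omega) (by omega) (by omega),
        cpos_eq (by omega) (by omega) (by omega) (by omega)]
    split_ifs <;> omega
end

section
/- Let f (with white fixed point set W) be a decorated permutation of [2n] of type C, let 𝓘 be its Grassmann necklace, let M be the positroid of 𝓘, and let S := {a ∈ [n] : f⁻¹(a) > n} and r := |S| + 1. Then every symmetric weakly separated collection in M contains at most r pair-free elements. -/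
open Finset

/-!
Let `lowCard n K` be the number of elements of `K` in `[n]`. If `I ≠ J` are pair-free `n`-subsets
of `[2n]`, each contains exactly one element of every pair `{a, a'}`, so `J ∖ I` is the reflection
of `I ∖ J`; weak separation then forces `I ∖ J` to lie entirely in `[n]` or entirely in
`[n+1, 2n]`, hence `lowCard n I ≠ lowCard n J`. On the positroid the Gale inequalities at `1` and
at `n+1` confine `lowCard n` to `[lowCard n I_{n+1}, lowCard n I_1]`, an interval of length at
most `|S|`: an element `x ≤ n` of `I_1` missing from `I_{n+1}` has `f⁻¹(x) > n`.
-/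

lemma cpos_eq_ite {m a x : ℕ} (h : x < a + m) :
    cpos m a x = if a ≤ x then x - a else x + m - a := by
  unfold cpos
  split_ifs with hax
  · rw [show x + m - a = x - a + m by omega, Nat.add_mod_right, Nat.mod_eq_of_lt (by omega)]
  · obtain rfl | hm := m.eq_zero_or_pos
    · exact Nat.mod_zero _
    · exact Nat.mod_eq_of_lt (by omega)

lemma cpos_injOn_s11 {m a : ℕ} (ha : a ∈ Icc 1 m) : Set.InjOn (cpos m a) (Icc 1 m : Finset ℕ) := by
  intro x hx y hy hxy
  simp only [coe_Icc, Set.mem_Icc] at hx hy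
  rw [mem_Icc] at ha
  rw [cpos_eq_ite (by omega), cpos_eq_ite (by omega)] at hxy
  split_ifs at hxy <;> omega

lemma countP_lt_le_of_forall₂_le {l l' : List ℕ} (t : ℕ) (h : List.Forall₂ (· ≤ ·) l l') :
    l'.countP (· < t) ≤ l.countP (· < t) := by
  induction h with
  | nil => rfl
  | cons _ _ ih =>
    simp only [List.countP_cons]
    split_ifs <;> simp_all <;> omega

lemma countP_sort_eq_card_filter (s : Finset ℕ) (p : ℕ → Prop) [DecidablePred p] :
    (s.sort (· ≤ ·)).countP (fun x => p x) = #(s.filter p) := by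
  rw [← Multiset.coe_countP, sort_eq, Multiset.countP_eq_card_filter]
  rfl

lemma card_filter_cpos_lt_le_of_galeLe {m a t : ℕ} {I J : Finset ℕ} (ha : a ∈ Icc 1 m)
    (hI : I ⊆ Icc 1 m) (hJ : J ⊆ Icc 1 m) (h : galeLe m a I J) :
    #(J.filter fun x => cpos m a x < t) ≤ #(I.filter fun x => cpos m a x < t) := by
  have hcount : ∀ K ⊆ Icc 1 m, #(K.filter fun x => cpos m a x < t)
      = ((K.image (cpos m a)).sort (· ≤ ·)).countP (· < t) := fun K hK => by
    rw [countP_sort_eq_card_filter, filter_image, card_image_of_injOn ((cpos_injOn_s11 ha).mono ?_)]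
    exact fun x hx => hK (mem_filter.1 hx).1
  rw [hcount I hI, hcount J hJ]
  exact countP_lt_le_of_forall₂_le t h

lemma filter_cpos_one_lt {n : ℕ} {K : Finset ℕ} (hK : K ⊆ Icc 1 (2 * n)) :
    K.filter (fun x => cpos (2 * n) 1 x < n) = K.filter (· ≤ n) :=
  filter_congr fun x hx => by
    have := mem_Icc.1 (hK hx)
    rw [cpos_eq_ite (by omega)]
    split_ifs <;> omega

lemma filter_cpos_succ_lt {n : ℕ} {K : Finset ℕ} (hK : K ⊆ Icc 1 (2 * n)) :
    K.filter (fun x => cpos (2 * n) (n + 1) x < n) = K.filter (n < ·) :=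
  filter_congr fun x hx => by
    have := mem_Icc.1 (hK hx)
    rw [cpos_eq_ite (by omega)]
    split_ifs <;> omega

def lowCard (n : ℕ) (K : Finset ℕ) : ℕ := #(K.filter (· ≤ n))

lemma lowCard_add_card_filter_lt (n : ℕ) (K : Finset ℕ) :
    lowCard n K + #(K.filter (n < ·)) = #K := by
  simpa only [lowCard, not_le] using card_filter_add_card_filter_not (s := K) (· ≤ n)

section positroid

variable {n : ℕ} {ℐ : ℕ → Finset ℕ} {J : Finset ℕ}

lemma lowCard_le_of_mem_positroid (hn : 0 < n) (hℐ : ℐ 1 ⊆ Icc 1 (2 * n))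
    (hJ : J ∈ positroid n ℐ) : lowCard n J ≤ lowCard n (ℐ 1) := by
  obtain ⟨hJs, -, hgale⟩ := hJ
  have h1 : 1 ∈ Icc 1 (2 * n) := mem_Icc.2 ⟨le_rfl, by omega⟩
  have := card_filter_cpos_lt_le_of_galeLe (t := n) h1 hℐ hJs (hgale 1 h1)
  rwa [filter_cpos_one_lt hJs, filter_cpos_one_lt hℐ] at this

lemma lowCard_ge_of_mem_positroid (hn : 0 < n) (hℐ : ℐ (n + 1) ⊆ Icc 1 (2 * n))
    (hℐcard : #(ℐ (n + 1)) = n) (hJ : J ∈ positroid n ℐ) :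
    lowCard n (ℐ (n + 1)) ≤ lowCard n J := by
  obtain ⟨hJs, hJcard, hgale⟩ := hJ
  have hn1 : n + 1 ∈ Icc 1 (2 * n) := mem_Icc.2 ⟨by omega, by omega⟩
  have := card_filter_cpos_lt_le_of_galeLe (t := n) hn1 hℐ hJs (hgale (n + 1) hn1)
  rw [filter_cpos_succ_lt hJs, filter_cpos_succ_lt hℐ] at this
  have := lowCard_add_card_filter_lt n J
  have := lowCard_add_card_filter_lt n (ℐ (n + 1))
  omega

end positroid

section necklace

variable {n : ℕ} {f : Equiv.Perm ℕ} {W : Finset ℕ}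

lemma necklaceOf_subset (hW : ∀ w ∈ W, w ∈ Icc 1 (2 * n) ∧ f w = w) (a : ℕ) :
    necklaceOf n f W a ⊆ Icc 1 (2 * n) :=
  union_subset (filter_subset _ _) fun w hw => (hW w hw).1

lemma lowCard_necklaceOf_one_le (hf : ∀ i ∈ Icc 1 (2 * n), f i ∈ Icc 1 (2 * n)) :
    lowCard n (necklaceOf n f W 1) ≤
      lowCard n (necklaceOf n f W (n + 1)) + #((Icc 1 n).filter fun a => n < f.symm a) := by
  have hsub : (necklaceOf n f W 1).filter (· ≤ n) ⊆
      (necklaceOf n f W (n + 1)).filter (· ≤ n) ∪ (Icc 1 n).filter fun a => n < f.symm a := by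
    intro x hx
    simp only [necklaceOf, mem_union, mem_filter] at hx ⊢
    obtain ⟨⟨hxIcc, hne, hlt⟩ | hxW, hxn⟩ := hx
    · have hy := mem_Icc.1 (Equiv.Perm.perm_symm_on_of_perm_on_finset hf hxIcc)
      have hx := mem_Icc.1 hxIcc
      simp only [clt] at hlt ⊢
      rw [cpos_eq_ite (by omega), cpos_eq_ite (by omega)] at hlt
      by_cases hyn : f.symm x ≤ n
      · refine .inl ⟨.inl ⟨hxIcc, hne, ?_⟩, hxn⟩
        rw [cpos_eq_ite (by omega), cpos_eq_ite (by omega)]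
        split_ifs at hlt ⊢ <;> omega
      · exact .inr ⟨mem_Icc.2 ⟨hx.1, hxn⟩, by omega⟩
    · exact .inl ⟨.inr hxW, hxn⟩
  exact (card_le_card hsub).trans (card_union_le _ _)

end necklace

section pairFree

variable {n : ℕ} {I J : Finset ℕ}

lemma PairFree.reflect_notMem (hI : PairFree n I) {y : ℕ} (hy : y ∈ I)
    (hy' : y ∈ Icc 1 (2 * n)) : 2 * n + 1 - y ∉ I := by
  rw [mem_Icc] at hy'
  intro hyI
  rcases le_or_gt y n with hyn | hyn
  · exact hI y (mem_Icc.2 ⟨hy'.1, hyn⟩) ⟨hy, hyI⟩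
  · exact hI (2 * n + 1 - y) (mem_Icc.2 ⟨by omega, by omega⟩)
      ⟨hyI, by rwa [show 2 * n + 1 - (2 * n + 1 - y) = y by omega]⟩

/-- Pigeonhole: the `n` elements of `I` lie in distinct pairs `{a, a'}`, so they meet all `n`
pairs. -/
lemma PairFree.reflect_mem_of_notMem (hI : PairFree n I) (hIs : I ⊆ Icc 1 (2 * n))
    (hIcard : #I = n) {x : ℕ} (hx : x ∈ Icc 1 (2 * n)) (hxI : x ∉ I) : 2 * n + 1 - x ∈ I := by
  by_contra hx'I
  have hx := mem_Icc.1 hx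
  obtain ⟨y, hy, z, hz, hyz, hpair⟩ := exists_ne_map_eq_of_card_lt_of_maps_to
    (s := I) (t := (Icc 1 n).erase (min x (2 * n + 1 - x))) (f := fun y => min y (2 * n + 1 - y))
    (by rw [card_erase_of_mem (mem_Icc.2 (by omega)), Nat.card_Icc]; omega)
    (fun y hy => by
      have := mem_Icc.1 (hIs hy)
      have : y ≠ x := fun h => hxI (h ▸ hy)
      have : y ≠ 2 * n + 1 - x := fun h => hx'I (h ▸ hy)
      simp only [coe_erase, coe_Icc, Set.mem_sdiff, Set.mem_Icc, Set.mem_singleton_iff]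
      omega)
  have := mem_Icc.1 (hIs hy)
  have := mem_Icc.1 (hIs hz)
  exact hI.reflect_notMem hy (hIs hy) (by rwa [show 2 * n + 1 - y = z by omega])

lemma PairFree.reflect_mem_iff (hI : PairFree n I) (hIs : I ⊆ Icc 1 (2 * n)) (hIcard : #I = n)
    {x : ℕ} (hx : x ∈ Icc 1 (2 * n)) : 2 * n + 1 - x ∈ I ↔ x ∉ I :=
  ⟨fun hx' hxI => hI.reflect_notMem hxI hx hx', hI.reflect_mem_of_notMem hIs hIcard hx⟩

lemma PairFree.reflect_mem_sdiff (hI : PairFree n I) (hJ : PairFree n J)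
    (hIs : I ⊆ Icc 1 (2 * n)) (hJs : J ⊆ Icc 1 (2 * n)) (hIcard : #I = n) (hJcard : #J = n)
    {y : ℕ} (hy : y ∈ J \ I) : 2 * n + 1 - y ∈ I \ J := by
  rw [mem_sdiff] at hy ⊢
  have hyb := hJs hy.1
  rw [hI.reflect_mem_iff hIs hIcard hyb, hJ.reflect_mem_iff hJs hJcard hyb, not_not]
  exact hy.symm

end pairFree

section weaklySeparated

variable {n : ℕ} {I J : Finset ℕ}

/-- If `p ≤ n < y` both lie in `I ∖ J`, then `p', y' ∈ J ∖ I` and the cyclic sequence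
`p, y', y, p'` (if `p < y'`) or `p, p', y, y'` (if `p > y'`) alternates between `I ∖ J` and
`J ∖ I`. -/
lemma le_of_mem_sdiff_of_wSep (hI : PairFree n I) (hJ : PairFree n J)
    (hIs : I ⊆ Icc 1 (2 * n)) (hJs : J ⊆ Icc 1 (2 * n)) (hIcard : #I = n) (hJcard : #J = n)
    (hws : WSep (2 * n) I J) {p y : ℕ} (hp : p ∈ I \ J) (hpn : p ≤ n) (hy : y ∈ I \ J) :
    y ≤ n := by
  by_contra hyn
  have hp' := hJ.reflect_mem_sdiff hI hJs hIs hJcard hIcard hp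
  have hy' := hJ.reflect_mem_sdiff hI hJs hIs hJcard hIcard hy
  have hpb := mem_Icc.1 (hIs (mem_sdiff.1 hp).1)
  have hyb := mem_Icc.1 (hIs (mem_sdiff.1 hy).1)
  have hne : p ≠ 2 * n + 1 - y := fun h => (mem_sdiff.1 hy').2 (h ▸ (mem_sdiff.1 hp).1)
  refine hws (hne.lt_or_gt.elim
    (fun _ => ⟨1, p, 2 * n + 1 - y, y, 2 * n + 1 - p, mem_Icc.2 ⟨le_rfl, by omega⟩,
      hp, hy, hy', hp', ?_, ?_, ?_⟩)
    (fun _ => ⟨p, p, 2 * n + 1 - p, y, 2 * n + 1 - y, mem_Icc.2 ⟨hpb.1, by omega⟩,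
      hp, hy, hp', hy', ?_, ?_, ?_⟩)) <;>
  · simp only [clt]
    rw [cpos_eq_ite (by omega), cpos_eq_ite (by omega)]
    split_ifs <;> omega

lemma lowCard_lt_of_sdiff (hne : (I \ J).Nonempty) (hlow : ∀ x ∈ I \ J, x ≤ n)
    (hhigh : ∀ x ∈ J \ I, n < x) : lowCard n J < lowCard n I := by
  refine card_lt_card ((ssubset_iff_of_subset fun x hx => ?_).2 ?_)
  · rw [mem_filter] at hx ⊢
    refine ⟨?_, hx.2⟩
    by_contra hxI
    exact (hhigh x (mem_sdiff.2 ⟨hx.1, hxI⟩)).not_ge hx.2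
  · obtain ⟨x, hx⟩ := hne
    exact ⟨x, mem_filter.2 ⟨(mem_sdiff.1 hx).1, hlow x hx⟩,
      fun h => (mem_sdiff.1 hx).2 (mem_filter.1 h).1⟩

lemma lowCard_lt_of_wSep (hI : PairFree n I) (hJ : PairFree n J)
    (hIs : I ⊆ Icc 1 (2 * n)) (hJs : J ⊆ Icc 1 (2 * n)) (hIcard : #I = n) (hJcard : #J = n)
    (hws : WSep (2 * n) I J) {x : ℕ} (hx : x ∈ I \ J) (hxn : x ≤ n) :
    lowCard n J < lowCard n I := by
  have hlow y (hy : y ∈ I \ J) : y ≤ n :=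
    le_of_mem_sdiff_of_wSep hI hJ hIs hJs hIcard hJcard hws hx hxn hy
  refine lowCard_lt_of_sdiff ⟨x, hx⟩ hlow fun y hy => ?_
  have := hlow _ (hI.reflect_mem_sdiff hJ hIs hJs hIcard hJcard hy)
  have := mem_Icc.1 (hJs (mem_sdiff.1 hy).1)
  omega

lemma lowCard_injOn_pairFree {C : Finset (Finset ℕ)} (hC : IsWSColl (2 * n) n C) :
    Set.InjOn (lowCard n) (C.filter (PairFree n)) := by
  intro I hI J hJ hlow
  obtain ⟨hIC, hIpf⟩ := mem_filter.1 (mem_coe.1 hI)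
  obtain ⟨hJC, hJpf⟩ := mem_filter.1 (mem_coe.1 hJ)
  obtain ⟨hIs, hIcard⟩ := hC.1 I hIC
  obtain ⟨hJs, hJcard⟩ := hC.1 J hJC
  by_contra hne
  obtain ⟨x, hx⟩ : (I \ J).Nonempty :=
    sdiff_nonempty.2 fun h => hne (eq_of_subset_of_card_le h (by omega))
  have hxb := mem_Icc.1 (hIs (mem_sdiff.1 hx).1)
  rcases le_or_gt x n with hxn | hxn
  · exact (lowCard_lt_of_wSep hIpf hJpf hIs hJs hIcard hJcard (hC.2 I hIC J hJC) hx hxn).ne' hlow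
  · exact (lowCard_lt_of_wSep hJpf hIpf hJs hIs hJcard hIcard (hC.2 J hJC I hIC)
      (hJpf.reflect_mem_sdiff hIpf hJs hIs hJcard hIcard hx) (by omega)).ne hlow

end weaklySeparated

theorem statement11_general (n : ℕ) (f : Equiv.Perm ℕ) (W : Finset ℕ)
    (hf : IsDecPermC n f W)
    (C : Finset (Finset ℕ)) (hC : IsWSCollIn n (necklaceOf n f W) C) :
    (C.filter fun I => PairFree n I).card
      ≤ ((Finset.Icc 1 n).filter fun a => n < f.symm a).card + 1 := by
  obtain ⟨hneck, hpos, hws⟩ := hC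
  obtain rfl | hn := n.eq_zero_or_pos
  · have hempty J (hJ : J ∈ C) : J = ∅ := subset_empty.1 (by simpa using (hpos J hJ).1)
    refine (card_le_one.2 fun I hI J hJ => ?_).trans (Nat.le_add_left 1 _)
    rw [hempty I (mem_filter.1 hI).1, hempty J (mem_filter.1 hJ).1]
  have hS := lowCard_necklaceOf_one_le (W := W) hf.1
  set ℐ := necklaceOf n f W
  have hℐ := necklaceOf_subset hf.2.2.1
  have hℐcard : #(ℐ (n + 1)) = n := (hpos _ (hneck (n + 1) (mem_Icc.2 ⟨by omega, by omega⟩))).2.1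
  have hmaps : Set.MapsTo (lowCard n) (C.filter (PairFree n))
      (Icc (lowCard n (ℐ (n + 1))) (lowCard n (ℐ 1))) := fun J hJ =>
    have hJ := hpos J (mem_filter.1 hJ).1
    mem_Icc.2 ⟨lowCard_ge_of_mem_positroid hn (hℐ _) hℐcard hJ,
      lowCard_le_of_mem_positroid hn (hℐ 1) hJ⟩
  have hinj := lowCard_injOn_pairFree ⟨fun J hJ => ⟨(hpos J hJ).1, (hpos J hJ).2.1⟩, hws⟩
  calc #(C.filter (PairFree n)) ≤ #(Icc (lowCard n (ℐ (n + 1))) (lowCard n (ℐ 1))) :=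
        card_le_card_of_injOn _ hmaps hinj
    _ ≤ _ := by rw [Nat.card_Icc]; omega

/-- Every symmetric weakly separated collection in `M` contains
at most `r = |S| + 1` pair-free elements, where `S = {a ∈ [n] : f⁻¹(a) > n}`. -/
theorem statement11 (n : ℕ) (f : Equiv.Perm ℕ) (W : Finset ℕ)
    (hf : IsDecPermC n f W)
    (C : Finset (Finset ℕ)) (hC : IsWSCollIn n (necklaceOf n f W) C)
    (hsym : IsSym n C) :
    (C.filter fun I => PairFree n I).card
      ≤ ((Finset.Icc 1 n).filter fun a => n < f.symm a).card + 1 :=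
  statement11_general n f W hf C hC
end

section
/- Let n ≥ 1 and let I be an admissible n-element subset of [2n], and write v_I = (x, y) ∈ ℝ². Then x = 0 if and only if I is pair-free. Moreover, if I has at least one full pair, then x < 0 if and only if every full pair of I is above every empty pair of I, and x > 0 if and only if every empty pair of I is above every full pair of I. -/
open Finset

/-- The point `v_j = (cos θ_j, sin θ_j)` with `θ_j = π + (2j−1)π/(2n)`. -/
noncomputable def vpt (n j : ℕ) : ℝ × ℝ :=
  (Real.cos (Real.pi + (2 * (j : ℝ) - 1) * Real.pi / (2 * (n : ℝ))),
   Real.sin (Real.pi + (2 * (j : ℝ) - 1) * Real.pi / (2 * (n : ℝ))))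

/-- `v_I = ∑_{i ∈ I} v_i`. -/
noncomputable def vSet (n : ℕ) (I : Finset ℕ) : ℝ × ℝ := ∑ i ∈ I, vpt n i

/-! The `x`-coordinate of `v_j` is `-cos ((2j-1)π/(2n))`: it is the same for `j` and `j'`,
strictly increasing along `1, …, n`, and sums to `0` over `[n]`. Hence
`x(v_I) = Σ_{a full} x(v_a) - Σ_{a empty} x(v_a)`, and since `|I| = n` there are as many full as
empty pairs. Admissibility forbids the patterns full < empty < full and empty < full < empty
(each yields an alternating quadruple for `I` and `Ī`), so the full pairs lie either all above or
all below the empty pairs, and monotonicity of the `x`-coordinate decides the sign. -/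

open Real

lemma vpt_fst (n j : ℕ) : (vpt n j).1 = -cos ((2 * j - 1) * π / (2 * n)) := by
  rw [vpt, add_comm, cos_add_pi]

lemma vpt_fst_reflect {n a : ℕ} (hn : n ≠ 0) (ha : a ≤ 2 * n + 1) :
    (vpt n (2 * n + 1 - a)).1 = (vpt n a).1 := by
  have hangle : (2 * ((2 * n + 1 - a : ℕ) : ℝ) - 1) * π / (2 * n)
      = 2 * π - (2 * a - 1) * π / (2 * n) := by
    push_cast [Nat.cast_sub ha]; field_simp; ring
  rw [vpt_fst, vpt_fst, hangle, cos_two_pi_sub]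

lemma vpt_fst_reflect_half {n a : ℕ} (hn : n ≠ 0) (ha : a ≤ n + 1) :
    (vpt n (n + 1 - a)).1 = -(vpt n a).1 := by
  have hangle : (2 * ((n + 1 - a : ℕ) : ℝ) - 1) * π / (2 * n)
      = π - (2 * a - 1) * π / (2 * n) := by
    push_cast [Nat.cast_sub ha]; field_simp; ring
  rw [vpt_fst, vpt_fst, hangle, cos_pi_sub]

lemma sum_vpt_fst_Icc (n : ℕ) : ∑ a ∈ Icc 1 n, (vpt n a).1 = 0 := by
  refine sum_involution (fun a _ => n + 1 - a) (fun a ha => ?_) (fun a ha hne heq => ?_)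
    (fun a ha => ?_) (fun a ha => ?_) <;> simp only [mem_Icc] at ha
  · rw [vpt_fst_reflect_half (by omega) (by omega), add_neg_cancel]
  · have := vpt_fst_reflect_half (n := n) (a := a) (by omega) (by omega)
    rw [heq] at this
    exact hne (by linarith)
  · simp only [mem_Icc]; omega
  · omega

lemma vpt_fst_strictMonoOn (n : ℕ) : StrictMonoOn (fun j => (vpt n j).1) (Set.Icc 1 n) := by
  intro a ⟨ha1, han⟩ b ⟨hb1, hbn⟩ hab
  have hn : (0 : ℝ) < 2 * n := by
    have : (1 : ℝ) ≤ n := by exact_mod_cast ha1.trans han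
    linarith
  have mem : ∀ c : ℕ, 1 ≤ c → c ≤ n → (2 * (c : ℝ) - 1) * π / (2 * n) ∈ Set.Icc 0 π := by
    intro c hc1 hcn
    have hc1' : (1 : ℝ) ≤ c := by exact_mod_cast hc1
    have hcn' : (c : ℝ) ≤ n := by exact_mod_cast hcn
    constructor
    · exact div_nonneg (by nlinarith [pi_pos]) hn.le
    · rw [div_le_iff₀ hn]; nlinarith [pi_pos]
  simp only [vpt_fst, neg_lt_neg_iff]
  apply strictAntiOn_cos (mem a ha1 han) (mem b hb1 hbn)
  have : (a : ℝ) < b := by exact_mod_cast hab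
  gcongr

lemma sum_Icc_two_mul_eq_sum_pairs {M : Type*} [AddCommMonoid M] (h : ℕ → M) (n : ℕ) :
    ∑ i ∈ Icc 1 (2 * n), h i = ∑ a ∈ Icc 1 n, (h a + h (2 * n + 1 - a)) := by
  have hIcc (k : ℕ) : Icc 1 k = Ioc 0 k := Icc_add_one_left_eq_Ioc 0 k
  rw [sum_add_distrib, hIcc, hIcc, ← sum_Ioc_consecutive h (Nat.zero_le n) (by omega : n ≤ 2 * n)]
  congr 1
  refine sum_nbij' (fun i => 2 * n + 1 - i) (fun a => 2 * n + 1 - a) ?_ ?_ ?_ ?_ ?_ <;>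
    intro i hi <;> simp only [mem_Ioc] at hi ⊢
  iterate 4 omega
  rw [show 2 * n + 1 - (2 * n + 1 - i) = i by omega]

lemma cpos_one {m x : ℕ} (h₁ : 1 ≤ x) (h₂ : x ≤ m) : cpos m 1 x = x - 1 := by
  rw [cpos, show x + m - 1 = x - 1 + m by omega, Nat.add_mod_right, Nat.mod_eq_of_lt (by omega)]

lemma clt_one_of_lt {m x y : ℕ} (hx : 1 ≤ x) (hxy : x < y) (hy : y ≤ m) : clt m 1 x y := by
  rw [clt, cpos_one hx (by omega), cpos_one (by omega) hy]
  omega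

lemma not_wSep_of_lt {m : ℕ} {I J : Finset ℕ} {x₁ x₂ x₃ x₄ : ℕ} (h₁ : 1 ≤ x₁) (h₁₂ : x₁ < x₂)
    (h₂₃ : x₂ < x₃) (h₃₄ : x₃ < x₄) (h₄ : x₄ ≤ m) (hx₁ : x₁ ∈ I \ J) (hx₂ : x₂ ∈ J \ I)
    (hx₃ : x₃ ∈ I \ J) (hx₄ : x₄ ∈ J \ I) : ¬ WSep m I J :=
  not_not.mpr ⟨1, x₁, x₂, x₃, x₄, mem_Icc.mpr ⟨le_rfl, by omega⟩, hx₁, hx₃, hx₂, hx₄,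
    clt_one_of_lt h₁ h₁₂ (by omega), clt_one_of_lt (by omega) h₂₃ (by omega),
    clt_one_of_lt (by omega) h₃₄ h₄⟩

lemma forall_forall_imp_imp_iff_forall_filter {α : Type*} [LT α] {s : Finset α} {P Q : α → Prop}
    [DecidablePred P] [DecidablePred Q] :
    (∀ a ∈ s, ∀ b ∈ s, P a → Q b → a < b) ↔ ∀ a ∈ s.filter P, ∀ b ∈ s.filter Q, a < b := by
  simp only [mem_filter, and_imp]
  grind

section Separated

variable {α β : Type*} [LinearOrder α] [AddCommGroup β] [LinearOrder β] [IsOrderedAddMonoid β]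
  {f : α → β} {s : Set α} {F E : Finset α}

lemma sum_lt_sum_of_forall_lt (hf : StrictMonoOn f s) (hFs : ↑F ⊆ s) (hEs : ↑E ⊆ s)
    (hcard : F.card = E.card) (hF : F.Nonempty) (hFE : ∀ a ∈ F, ∀ b ∈ E, a < b) :
    ∑ a ∈ F, f a < ∑ b ∈ E, f b := by
  have hE : E.Nonempty := card_pos.mp (hcard ▸ card_pos.mpr hF)
  set b₀ := E.min' hE
  have hb₀ : b₀ ∈ E := E.min'_mem hE
  calc ∑ a ∈ F, f a < ∑ _a ∈ F, f b₀ :=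
        sum_lt_sum_of_nonempty hF fun a ha => hf (hFs ha) (hEs hb₀) (hFE a ha b₀ hb₀)
    _ = E.card • f b₀ := by rw [sum_const, hcard]
    _ ≤ ∑ b ∈ E, f b := card_nsmul_le_sum _ _ _ fun b hb =>
        hf.monotoneOn (hEs hb₀) (hEs hb) (E.min'_le b hb)

lemma sign_sum_sub_sum_of_separated (hf : StrictMonoOn f s) (hFs : ↑F ⊆ s) (hEs : ↑E ⊆ s)
    (hcard : F.card = E.card)
    (hsep : (∀ a ∈ F, ∀ b ∈ E, a < b) ∨ (∀ a ∈ E, ∀ b ∈ F, a < b)) :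
    (∑ a ∈ F, f a - ∑ b ∈ E, f b = 0 ↔ F = ∅) ∧
      (F.Nonempty →
        ((∑ a ∈ F, f a - ∑ b ∈ E, f b < 0 ↔ ∀ a ∈ F, ∀ b ∈ E, a < b) ∧
          (0 < ∑ a ∈ F, f a - ∑ b ∈ E, f b ↔ ∀ a ∈ E, ∀ b ∈ F, a < b))) := by
  rcases F.eq_empty_or_nonempty with rfl | hF
  · rw [card_empty, eq_comm, card_eq_zero] at hcard
    simp [hcard]
  have hE : E.Nonempty := card_pos.mp (hcard ▸ card_pos.mpr hF)
  have hnot : ¬ ((∀ a ∈ F, ∀ b ∈ E, a < b) ∧ ∀ a ∈ E, ∀ b ∈ F, a < b) := by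
    rintro ⟨hFE, hEF⟩
    obtain ⟨a, ha⟩ := hF
    obtain ⟨b, hb⟩ := hE
    exact (hFE a ha b hb).asymm (hEF b hb a ha)
  rcases hsep with hFE | hEF
  · have hlt := sum_lt_sum_of_forall_lt hf hFs hEs hcard hF hFE
    refine ⟨iff_of_false (sub_eq_zero.not.mpr hlt.ne) hF.ne_empty, fun _ => ⟨?_, ?_⟩⟩
    · exact iff_of_true (sub_neg.mpr hlt) hFE
    · exact iff_of_false (sub_pos.not.mpr hlt.not_gt) fun hEF => hnot ⟨hFE, hEF⟩
  · have hlt := sum_lt_sum_of_forall_lt hf hEs hFs hcard.symm hE hEF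
    refine ⟨iff_of_false (sub_eq_zero.not.mpr hlt.ne') hF.ne_empty, fun _ => ⟨?_, ?_⟩⟩
    · exact iff_of_false (sub_neg.not.mpr hlt.not_gt) fun hFE => hnot ⟨hFE, hEF⟩
    · exact iff_of_true (sub_pos.mpr hlt) hEF

end Separated

def fullPairs (n : ℕ) (I : Finset ℕ) : Finset ℕ := (Icc 1 n).filter (FullPair n I)

def emptyPairs (n : ℕ) (I : Finset ℕ) : Finset ℕ := (Icc 1 n).filter (EmptyPair n I)

section Pairs

variable {n : ℕ} {I : Finset ℕ} {p q r : ℕ}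

lemma sum_eq_sum_Icc_add_sum_fullPairs_sub_sum_emptyPairs {G : Type*} [AddCommGroup G]
    (hI : I ⊆ Icc 1 (2 * n)) (g : ℕ → G)
    (hg : ∀ a ∈ Icc 1 n, g (2 * n + 1 - a) = g a) :
    ∑ i ∈ I, g i = ∑ a ∈ Icc 1 n, g a + ∑ a ∈ fullPairs n I, g a - ∑ a ∈ emptyPairs n I, g a := by
  have hsum : ∑ i ∈ I, g i = ∑ i ∈ Icc 1 (2 * n), if i ∈ I then g i else 0 := by
    rw [sum_ite_mem, inter_eq_right.mpr hI]
  rw [hsum, sum_Icc_two_mul_eq_sum_pairs, fullPairs, emptyPairs, sum_filter, sum_filter,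
    ← sum_add_distrib, ← sum_sub_distrib]
  refine sum_congr rfl fun a ha => ?_
  rw [hg a ha]
  by_cases h₁ : a ∈ I <;> by_cases h₂ : 2 * n + 1 - a ∈ I <;> simp [FullPair, EmptyPair, h₁, h₂]

lemma card_fullPairs_eq_card_emptyPairs (hI : I ⊆ Icc 1 (2 * n)) (hcard : I.card = n) :
    (fullPairs n I).card = (emptyPairs n I).card := by
  have h := sum_eq_sum_Icc_add_sum_fullPairs_sub_sum_emptyPairs (G := ℤ) hI (fun _ => 1)
    (fun _ _ => rfl)
  simp only [sum_const, nsmul_eq_mul, mul_one, hcard, Nat.card_Icc] at h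
  omega

lemma vSet_fst_eq (hI : I ⊆ Icc 1 (2 * n)) :
    (vSet n I).1 = ∑ a ∈ fullPairs n I, (vpt n a).1 - ∑ a ∈ emptyPairs n I, (vpt n a).1 := by
  have hreflect (a : ℕ) (ha : a ∈ Icc 1 n) : (vpt n (2 * n + 1 - a)).1 = (vpt n a).1 := by
    rw [mem_Icc] at ha
    exact vpt_fst_reflect (by omega) (by omega)
  rw [vSet, Prod.fst_sum, sum_eq_sum_Icc_add_sum_fullPairs_sub_sum_emptyPairs hI _ hreflect,
    sum_vpt_fst_Icc, zero_add]

lemma mem_bar {b : ℕ} :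
    b ∈ bar n I ↔ b ∈ Icc 1 (2 * n) ∧ 2 * n + 1 - b ∉ I := by
  rw [bar, mem_sdiff, mem_image, and_congr_right_iff]
  intro hb
  rw [mem_Icc] at hb
  refine not_congr ⟨fun ⟨i, hi, hib⟩ => ?_, fun h => ⟨_, h, by omega⟩⟩
  rwa [show 2 * n + 1 - b = i by omega]

lemma FullPair.mem_sdiff_bar {a : ℕ} (ha : a ∈ Icc 1 n)
    (h : FullPair n I a) : a ∈ I \ bar n I ∧ 2 * n + 1 - a ∈ I \ bar n I := by
  rw [mem_Icc] at ha
  simp only [mem_sdiff, mem_bar, show 2 * n + 1 - (2 * n + 1 - a) = a by omega, h.1, h.2,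
    not_true_eq_false, and_false, not_false_eq_true, and_self]

lemma EmptyPair.mem_bar_sdiff {a : ℕ} (ha : a ∈ Icc 1 n)
    (h : EmptyPair n I a) : a ∈ bar n I \ I ∧ 2 * n + 1 - a ∈ bar n I \ I := by
  rw [mem_Icc] at ha
  simp only [mem_sdiff, mem_bar, mem_Icc, show 2 * n + 1 - (2 * n + 1 - a) = a by omega, h.1, h.2,
    not_false_eq_true, and_true]
  omega

-- The alternating quadruple is `p < q < r < q'`.
lemma not_admissible_of_full_empty_full (hp : 1 ≤ p) (hpq : p < q) (hqr : q < r) (hr : r ≤ n)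
    (hfp : FullPair n I p) (heq : EmptyPair n I q) (hfr : FullPair n I r) : ¬ Admissible n I :=
  not_wSep_of_lt hp hpq hqr (by omega) (by omega)
    (hfp.mem_sdiff_bar (mem_Icc.mpr ⟨hp, by omega⟩)).1
    (heq.mem_bar_sdiff (mem_Icc.mpr ⟨by omega, by omega⟩)).1
    (hfr.mem_sdiff_bar (mem_Icc.mpr ⟨by omega, hr⟩)).1
    (heq.mem_bar_sdiff (mem_Icc.mpr ⟨by omega, by omega⟩)).2

-- The alternating quadruple is `q < r < q' < p'`.
lemma not_admissible_of_empty_full_empty (hp : 1 ≤ p) (hpq : p < q) (hqr : q < r) (hr : r ≤ n)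
    (hep : EmptyPair n I p) (hfq : FullPair n I q) (her : EmptyPair n I r) : ¬ Admissible n I :=
  not_wSep_of_lt (by omega) hqr (by omega) (by omega) (by omega)
    (hfq.mem_sdiff_bar (mem_Icc.mpr ⟨by omega, by omega⟩)).1
    (her.mem_bar_sdiff (mem_Icc.mpr ⟨by omega, hr⟩)).1
    (hfq.mem_sdiff_bar (mem_Icc.mpr ⟨by omega, by omega⟩)).2
    (hep.mem_bar_sdiff (mem_Icc.mpr ⟨hp, by omega⟩)).2

lemma Admissible.fullPairs_lt_or_emptyPairs_lt (hadm : Admissible n I) :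
    (∀ a ∈ fullPairs n I, ∀ b ∈ emptyPairs n I, a < b) ∨
      (∀ a ∈ emptyPairs n I, ∀ b ∈ fullPairs n I, a < b) := by
  by_contra! ⟨⟨a, ha, b, hb, hba⟩, ⟨c, hc, d, hd, hdc⟩⟩
  simp only [fullPairs, emptyPairs, mem_filter, mem_Icc] at ha hb hc hd
  have hne {x y : ℕ} (hx : FullPair n I x) (hy : EmptyPair n I y) : x ≠ y := by
    rintro rfl; exact hy.1 hx.1
  rcases lt_trichotomy d b with hdb | rfl | hbd
  · exact not_admissible_of_full_empty_full hd.1.1 hdb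
      (hba.lt_of_ne (hne ha.2 hb.2).symm) ha.1.2 hd.2 hb.2 ha.2 hadm
  · exact hne hd.2 hb.2 rfl
  · exact not_admissible_of_empty_full_empty hb.1.1 hbd
      (hdc.lt_of_ne (hne hd.2 hc.2)) hc.1.2 hb.2 hd.2 hc.2 hadm

lemma pairFree_iff_fullPairs_eq_empty :
    PairFree n I ↔ fullPairs n I = ∅ :=
  filter_eq_empty_iff.symm

lemma exists_fullPair_iff_nonempty :
    (∃ a ∈ Icc 1 n, FullPair n I a) ↔ (fullPairs n I).Nonempty := by
  simp [fullPairs, Finset.Nonempty]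

end Pairs

theorem statement15_general (n : ℕ) (I : Finset ℕ)
    (hI : I ⊆ Finset.Icc 1 (2 * n)) (hcard : I.card = n)
    (hadm : Admissible n I) :
    ((vSet n I).1 = 0 ↔ PairFree n I) ∧
    ((∃ a ∈ Finset.Icc 1 n, FullPair n I a) →
      (((vSet n I).1 < 0 ↔
          ∀ a ∈ Finset.Icc 1 n, ∀ b ∈ Finset.Icc 1 n,
            FullPair n I a → EmptyPair n I b → a < b) ∧
       (0 < (vSet n I).1 ↔
          ∀ a ∈ Finset.Icc 1 n, ∀ b ∈ Finset.Icc 1 n,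
            EmptyPair n I a → FullPair n I b → a < b))) := by
  have hFs : ↑(fullPairs n I) ⊆ Set.Icc 1 n := by
    rw [← coe_Icc]; exact coe_subset.mpr (filter_subset _ _)
  have hEs : ↑(emptyPairs n I) ⊆ Set.Icc 1 n := by
    rw [← coe_Icc]; exact coe_subset.mpr (filter_subset _ _)
  rw [vSet_fst_eq hI, pairFree_iff_fullPairs_eq_empty, exists_fullPair_iff_nonempty,
    forall_forall_imp_imp_iff_forall_filter, forall_forall_imp_imp_iff_forall_filter]
  exact sign_sum_sub_sum_of_separated (vpt_fst_strictMonoOn n) hFs hEs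
    (card_fullPairs_eq_card_emptyPairs hI hcard) hadm.fullPairs_lt_or_emptyPairs_lt

/-- For an admissible `n`-element subset `I` of `[2n]` with
`v_I = (x, y)`: `x = 0` iff `I` is pair-free; and if `I` has a full pair, then
`x < 0` iff every full pair of `I` is above every empty pair, and `x > 0` iff
every empty pair of `I` is above every full pair. -/
theorem statement15 (n : ℕ) (hn : 1 ≤ n) (I : Finset ℕ)
    (hI : I ⊆ Finset.Icc 1 (2 * n)) (hcard : I.card = n)
    (hadm : Admissible n I) :
    ((vSet n I).1 = 0 ↔ PairFree n I) ∧
    ((∃ a ∈ Finset.Icc 1 n, FullPair n I a) →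
      (((vSet n I).1 < 0 ↔
          ∀ a ∈ Finset.Icc 1 n, ∀ b ∈ Finset.Icc 1 n,
            FullPair n I a → EmptyPair n I b → a < b) ∧
       (0 < (vSet n I).1 ↔
          ∀ a ∈ Finset.Icc 1 n, ∀ b ∈ Finset.Icc 1 n,
            EmptyPair n I a → FullPair n I b → a < b))) :=
  statement15_general n I hI hcard hadm
end
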